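/- Let k be a field of characteristic p with a fixed separable closure k((u))^sep ⊇ k((u)), and let φ on k((u))^sep extend the p-power Frobenius on k((u))-coefficients combined with u ↦ u^p in the sense of the norm-field setup (φ is the unique Frobenius-semilinear extension). Let (M, Φ) be a d-dimensional étale φ-module over k((u)), i.e., M ≅ k((u))^d with a φ-semilinear bijective Φ = A·φ for A ∈ GL_d(k((u))). Suppose L/k((u)) is a finite separable extension such that the fixed space U = (L ⊗_{k((u))} M)^{Φ ⊗ φ = id} has dimension d over F_p (more precisely over the prime field fixed by Φ). Let 𝔐₀ ⊂ L ⊗ M be the O_L-submodule generated by U. Then 𝔐₀ is an O_L-lattice in L ⊗ M satisfying (A·φ_L)(𝔐₀) generates 𝔐₀, i.e., the induced semilinear map preserves 𝔐₀ with image spanning 𝔐₀. -/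

import Mathlib

open scoped Classical

noncomputable section

/-- An `L`-vector space is a module over the valuation ring `O_L ⊆ L`. -/
noncomputable instance valSubModule {L : Type} [Field L] (O : ValuationSubring L)
    (V : Type) [AddCommGroup V] [Module L V] : Module ↥O V :=
  Module.compHom V (algebraMap ↥O L)

/-!
Choose an `L`-basis `b` of `span_L U` inside `U`. Applying `Φ` to `u = ∑ cᵢ bᵢ` with `u ∈ U` gives
`∑ cᵢ ^ p bᵢ = ∑ cᵢ bᵢ`, so every coordinate is a root of `X ^ p - X`; hence
`p ^ d = |U| ≤ p ^ (dim span_L U)` and `U` spans `V`. Since `a ^ p ∈ O_L` for `a ∈ O_L`, the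
`O_L`-span of `U` is `Φ`-stable, and it is generated by `Φ(U) = U`.
-/

open Polynomial Submodule

theorem finite_and_natCard_pow_eq_self_le {K : Type*} [Field K] {n : ℕ} (hn : 1 < n) :
    Finite {x : K // x ^ n = x} ∧ Nat.card {x : K // x ^ n = x} ≤ n := by
  set s := (X ^ n - X : K[X]).roots.toFinset
  have hs : ∀ x : K, x ^ n = x → x ∈ s := fun x hx => by
    simp [s, FiniteField.X_pow_card_sub_X_ne_zero K hn, hx]
  have hinj : Function.Injective fun x : {x : K // x ^ n = x} => (⟨x, hs x x.2⟩ : s) :=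
    fun _ _ h => Subtype.ext (congrArg Subtype.val h :)
  refine ⟨Finite.of_injective _ hinj, (Nat.card_le_card_of_injective _ hinj).trans ?_⟩
  calc Nat.card s = s.card := Nat.card_eq_finsetCard s
    _ ≤ Multiset.card (X ^ n - X : K[X]).roots := Multiset.toFinset_card_le _
    _ ≤ (X ^ n - X : K[X]).natDegree := card_roots' _
    _ = n := FiniteField.X_pow_card_sub_X_natDegree_eq K hn

theorem exists_fixed_coeffs_of_apply_eq_self {L V : Type*} [Ring L] [AddCommGroup V] [Module L V]
    (σ : L → L) (Φ : V →+ V)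
    (hΦ : ∀ (c : L) (v : V), Φ (c • v) = σ c • Φ v) {ι : Type*} [Fintype ι] {b : ι → V}
    (hb : LinearIndependent L b) (hbfix : ∀ i, Φ (b i) = b i) {v : V}
    (hv : v ∈ span L (Set.range b)) (hvfix : Φ v = v) :
    ∃ c : ι → L, (∀ i, σ (c i) = c i) ∧ ∑ i, c i • b i = v := by
  obtain ⟨c, rfl⟩ := mem_span_range_iff_exists_fun L |>.mp hv
  refine ⟨c, fun i => ?_, rfl⟩
  have hrel : ∑ i, (σ (c i) - c i) • b i = 0 := by
    simp only [sub_smul, Finset.sum_sub_distrib, sub_eq_zero]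
    simpa [map_sum, hΦ, hbfix] using hvfix
  exact sub_eq_zero.mp (Fintype.linearIndependent_iff.mp hb _ hrel i)

theorem natCard_fixedPoints_le {L V : Type*} [DivisionRing L] [AddCommGroup V] [Module L V]
    [Module.Finite L V] (σ : L → L) (Φ : V →+ V)
    (hΦ : ∀ (c : L) (v : V), Φ (c • v) = σ c • Φ v) [Finite {x : L // σ x = x}] :
    Nat.card {v : V // Φ v = v} ≤
      Nat.card {x : L // σ x = x} ^ Module.finrank L (span L {v : V | Φ v = v}) := by
  obtain ⟨b, hbS, hspan, hb⟩ := exists_linearIndependent L {v : V | Φ v = v}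
  have : Fintype b := @Fintype.ofFinite _ hb.finite
  have hmem : ∀ v : {v : V // Φ v = v}, (v : V) ∈ span L (Set.range ((↑) : b → V)) := fun v => by
    rw [Subtype.range_coe, hspan]
    exact subset_span v.2
  choose c hcfix hc using fun v : {v : V // Φ v = v} =>
    exists_fixed_coeffs_of_apply_eq_self σ Φ hΦ hb (fun i => hbS i.2) (hmem v) v.2
  have hinj : Function.Injective fun v i => (⟨c v i, hcfix v i⟩ : {x : L // σ x = x}) := by
    intro v w h
    refine Subtype.ext ?_
    have hcoeff : c v = c w := funext fun i => congrArg Subtype.val (congrFun h i)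
    rw [← hc v, ← hc w, hcoeff]
  calc Nat.card {v : V // Φ v = v} ≤ Nat.card (b → {x : L // σ x = x}) :=
        Nat.card_le_card_of_injective _ hinj
    _ = _ := by
      rw [Nat.card_fun, Nat.card_eq_fintype_card (α := b), ← finrank_span_eq_card hb,
        Subtype.range_coe, hspan]

theorem apply_mem_span_setOf_apply_eq_self {R M : Type*} [Semiring R] [AddCommMonoid M]
    [Module R M]
    (σ : R → R) (Φ : M →+ M) (hΦ : ∀ (a : R) (v : M), Φ (a • v) = σ a • Φ v) {v : M}
    (hv : v ∈ span R {v : M | Φ v = v}) : Φ v ∈ span R {v : M | Φ v = v} := by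
  induction hv using span_induction with
  | mem u hu => exact subset_span (show Φ (Φ u) = Φ u by rw [hu.out]; exact hu)
  | zero => simp
  | add x y _ _ hx hy => simpa using add_mem hx hy
  | smul a x _ hx => simpa [hΦ] using smul_mem _ (σ a) hx

theorem stmt14_general {p : ℕ} [Fact p.Prime] {L : Type} [Field L]
    {V : Type} [AddCommGroup V] [Module L V] (d : ℕ) [Module.Finite L V]
    (hdim : Module.finrank L V = d)
    (O : ValuationSubring L)
    -- `Φ = A·φ` is a bijective Frobenius-semilinear endomorphism of `V ≅ L^d`
    (Φ : V →+ V)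
    (hsemi : ∀ (c : L) (v : V), Φ (c • v) = c ^ p • Φ v)
    -- the fixed points `U` form a `d`-dimensional vector space over the prime field `𝔽_p`
    (hU : Nat.card {v : V // Φ v = v} = p ^ d) :
    -- `𝔐₀ = O_L·U` is a finitely generated `O_L`-lattice in `V` ...
    (Submodule.span (↥O) {v : V | Φ v = v}).FG ∧
      Submodule.span L ((Submodule.span (↥O) {v : V | Φ v = v} : Submodule ↥O V) : Set V) = ⊤ ∧
      -- ... whose image under `Φ` spans it back, i.e. `𝔐₀` is `Φ`-stable with spanning image
      Submodule.span (↥O) (Φ '' (Submodule.span (↥O) {v : V | Φ v = v} : Set V)) =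
        Submodule.span (↥O) {v : V | Φ v = v} := by
  have hp : 1 < p := (Fact.out : p.Prime).one_lt
  obtain ⟨_, hFp⟩ := finite_and_natCard_pow_eq_self_le (K := L) hp
  have hUfin : Finite {v : V // Φ v = v} :=
    Nat.finite_of_card_ne_zero (hU ▸ (pow_pos (by omega) d).ne')
  have hrank : Module.finrank L (span L {v : V | Φ v = v}) = Module.finrank L V := by
    refine le_antisymm (Submodule.finrank_le _) (hdim ▸ (Nat.pow_le_pow_iff_right hp).mp ?_)
    calc p ^ d = Nat.card {v : V // Φ v = v} := hU.symm
      _ ≤ _ := natCard_fixedPoints_le (· ^ p) Φ hsemi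
      _ ≤ _ := Nat.pow_le_pow_left hFp _
  have hΦO : ∀ (a : O) (v : V), Φ (a • v) = a ^ p • Φ v := fun a v => by
    change Φ ((a : L) • v) = ((a ^ p : O) : L) • Φ v
    rw [hsemi]; push_cast; rfl
  refine ⟨fg_span (Set.finite_coe_iff.mp hUfin), ?_, ?_⟩
  · exact eq_top_iff.mpr ((eq_top_of_finrank_eq hrank).ge.trans (span_mono subset_span))
  · refine le_antisymm (span_le.mpr ?_)
      (span_le.mpr fun v hv => subset_span ⟨v, subset_span hv, hv⟩)
    rintro _ ⟨v, hv, rfl⟩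
    exact apply_mem_span_setOf_apply_eq_self _ Φ hΦO hv

theorem stmt14 {p : ℕ} [Fact p.Prime] {L : Type} [Field L] [CharP L p]
    {V : Type} [AddCommGroup V] [Module L V] (d : ℕ) [Module.Finite L V]
    (hdim : Module.finrank L V = d)
    (O : ValuationSubring L)
    -- `Φ = A·φ` is a bijective Frobenius-semilinear endomorphism of `V ≅ L^d`
    (Φ : V →+ V) (hΦbij : Function.Bijective Φ)
    (hsemi : ∀ (c : L) (v : V), Φ (c • v) = c ^ p • Φ v)
    -- the fixed points `U` form a `d`-dimensional vector space over the prime field `𝔽_p`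
    (hU : Nat.card {v : V // Φ v = v} = p ^ d) :
    -- `𝔐₀ = O_L·U` is a finitely generated `O_L`-lattice in `V` ...
    (Submodule.span (↥O) {v : V | Φ v = v}).FG ∧
      Submodule.span L ((Submodule.span (↥O) {v : V | Φ v = v} : Submodule ↥O V) : Set V) = ⊤ ∧
      -- ... whose image under `Φ` spans it back, i.e. `𝔐₀` is `Φ`-stable with spanning image
      Submodule.span (↥O) (Φ '' (Submodule.span (↥O) {v : V | Φ v = v} : Set V)) =
        Submodule.span (↥O) {v : V | Φ v = v} :=
  stmt14_general d hdim O Φ hsemi hU
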